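/- Every rational function f in the Stieltjes class 𝔖 (i.e. f ∈ 𝔖 and f(z) = p(z)/q(z) on ℂ ∖ [0,∞) for some complex polynomials p, q with q ≠ 0) can be written in the form f(z) = γ + Σ_{j=1}^n σ_j/(t_j − z) for all z ∈ ℂ ∖ [0,∞), where n ≥ 0 is an integer, γ ≥ 0, σ_j > 0, and 0 ≤ t₁ < t₂ < … < tₙ; moreover this representation is unique: the integer n, the number γ, and the lists (t_j), (σ_j) are uniquely determined by f. -/

import Mathlib

open Complex MeasureTheory Polynomial Matrix Finset Filter Topology Real
open scoped ComplexConjugate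

noncomputable section

/-- The cut `[0, ∞)` viewed as a subset of `ℂ`. -/
def SCut : Set ℂ := {z : ℂ | 0 ≤ z.re ∧ z.im = 0}

/-- The slit domain `ℂ \ [0, ∞)`. -/
def SDom : Set ℂ := {z : ℂ | ¬ (0 ≤ z.re ∧ z.im = 0)}

/-- The Stieltjes class `𝔖`: functions analytic on `ℂ \ [0,∞)` that are either
nonnegative real constants or satisfy (i) `Im f(z) > 0` on the upper half-plane,
(ii) `f(x) > 0` for real `x < 0`, (iii) `conj (f z) = f (conj z)`. -/
def StieltjesClass (f : ℂ → ℂ) : Prop :=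
  AnalyticOnNhd ℂ f SDom ∧
  ((∃ c : ℝ, 0 ≤ c ∧ ∀ z ∈ SDom, f z = (c : ℂ)) ∨
    ((∀ z : ℂ, 0 < z.im → 0 < (f z).im) ∧
     (∀ x : ℝ, x < 0 → ∃ r : ℝ, 0 < r ∧ f (x : ℂ) = (r : ℂ)) ∧
     (∀ z ∈ SDom, conj (f z) = f (conj z))))

/-- A partial-fraction representation `f(z) = γ + Σ σ_k/(t_k − z)` with `γ ≥ 0`,
`σ_k > 0` and `0 ≤ t₁ < t₂ < … < tₙ`, valid on `ℂ \ [0,∞)`. -/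
def PFRep (f : ℂ → ℂ) (n : ℕ) (γ : ℝ) (t s : Fin n → ℝ) : Prop :=
  0 ≤ γ ∧ (∀ k, 0 < s k) ∧ (∀ k, 0 ≤ t k) ∧ StrictMono t ∧
  ∀ z ∈ SDom, f z = (γ : ℂ) + ∑ k, (s k : ℂ) / ((t k : ℂ) - z)



lemma isOpen_SDom : IsOpen SDom := by
  have : SCut = (Complex.re ⁻¹' Set.Ici 0) ∩ (Complex.im ⁻¹' {0}) := rfl
  have hclosed : IsClosed SCut := by
    rw [this]
    exact (isClosed_Ici.preimage Complex.continuous_re).inter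
      (isClosed_singleton.preimage Complex.continuous_im)
  have : SDom = SCutᶜ := rfl
  rw [this]
  exact hclosed.isOpen_compl

lemma mem_SDom_of_im_pos {z : ℂ} (h : 0 < z.im) : z ∈ SDom := fun hc => by
  rw [hc.2] at h; exact lt_irrefl 0 h

lemma mem_SDom_of_re_neg {z : ℂ} (h : z.re < 0) : z ∈ SDom := fun hc => by
  linarith [hc.1]

lemma tendsto_ray_pole {g : ℂ → ℂ} {a L : ℂ} (hg : Filter.Tendsto g (𝓝[≠] a) (𝓝 L))
    (e : ℂ) (he : e ≠ 0) :
    Filter.Tendsto (fun y : ℝ => g (a + (y : ℂ) * e)) (𝓝[>] (0:ℝ)) (𝓝 L) := by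
  refine hg.comp ?_
  rw [tendsto_nhdsWithin_iff]
  constructor
  · have hc : Filter.Tendsto (fun y : ℝ => a + (y:ℂ)*e) (𝓝 0) (𝓝 (a + ((0:ℝ):ℂ)*e)) :=
      (continuous_const.add (Complex.continuous_ofReal.mul continuous_const)).tendsto 0
    rw [Complex.ofReal_zero, zero_mul, add_zero] at hc
    exact hc.mono_left nhdsWithin_le_nhds
  · filter_upwards [self_mem_nhdsWithin] with y hy
    simp only [Set.mem_setOf_eq, Set.mem_compl_iff, Set.mem_singleton_iff]
    intro hcon
    have : (y:ℂ) * e = 0 := by linear_combination hcon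
    rcases mul_eq_zero.mp this with h | h
    · have hy0 : y = 0 := by exact_mod_cast h
      exact (ne_of_gt (Set.mem_Ioi.mp hy)) hy0
    · exact he h

/-- eventually avoid a finite set of reals on `𝓝[>] 0`. -/
lemma eventually_not_mem_finite_nhdsGT {Y : Set ℝ} (hY : Y.Finite) :
    ∀ᶠ y in 𝓝[>] (0:ℝ), y ∉ Y := by
  have hclosed : IsClosed (Y \ {0}) := (hY.subset Set.diff_subset).isClosed
  have h0 : (0:ℝ) ∉ Y \ {0} := fun h => h.2 rfl
  have : (Y \ {0})ᶜ ∈ 𝓝 (0:ℝ) := hclosed.isOpen_compl.mem_nhds h0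
  have h2 : ∀ᶠ y in 𝓝[>] (0:ℝ), y ∉ Y \ {0} :=
    (eventually_iff.mpr this).filter_mono nhdsWithin_le_nhds
  filter_upwards [self_mem_nhdsWithin, h2] with y hy hy2 hYy
  exact hy2 ⟨hYy, ne_of_gt hy⟩

lemma eventually_not_mem_finite_atTop {Y : Set ℝ} (hY : Y.Finite) :
    ∀ᶠ y in atTop, y ∉ Y := by
  obtain ⟨M, hM⟩ := hY.bddAbove
  filter_upwards [eventually_gt_atTop M] with y hy hYy
  exact absurd (hM hYy) (not_le.mpr hy)

lemma finite_ray_roots (q : Polynomial ℂ) (hq : q ≠ 0) (a e : ℂ) (he : e ≠ 0) :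
    {y : ℝ | q.eval (a + (y:ℂ)*e) = 0}.Finite := by
  have hfin : {z : ℂ | q.IsRoot z}.Finite := Polynomial.finite_setOf_isRoot hq
  have hinj : Function.Injective (fun y : ℝ => a + (y:ℂ)*e) := by
    intro y₁ y₂ h
    simp only at h
    have : ((y₁:ℂ) - y₂) * e = 0 := by linear_combination h
    rcases mul_eq_zero.mp this with h' | h'
    · exact_mod_cast sub_eq_zero.mp (by exact_mod_cast h')
    · exact absurd h' he
  exact Set.Finite.preimage hinj.injOn hfin

lemma finite_ray_roots' (q : Polynomial ℂ) (hq : q ≠ 0) (e : ℂ) (he : e ≠ 0) :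
    {y : ℝ | q.eval ((y:ℂ)*e) = 0}.Finite := by
  have := finite_ray_roots q hq 0 e he
  simpa using this

lemma im_exp_neg_mul (x : ℝ) (C : ℂ) :
    (C * (Complex.exp ((x:ℂ) * I)) ⁻¹).im = C.im * Real.cos x - C.re * Real.sin x := by
  rw [← Complex.exp_neg, ← neg_mul, show (-(x:ℂ)) = ((-x : ℝ) : ℂ) by push_cast; ring]
  rw [Complex.mul_im, Complex.exp_ofReal_mul_I_re, Complex.exp_ofReal_mul_I_im,
    Real.cos_neg, Real.sin_neg]
  ring

lemma im_mul_exp (x : ℝ) (C : ℂ) :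
    (C * Complex.exp ((x:ℂ) * I)).im = C.im * Real.cos x + C.re * Real.sin x := by
  rw [Complex.mul_im, Complex.exp_ofReal_mul_I_re, Complex.exp_ofReal_mul_I_im]
  ring


lemma pf_decomp : ∀ (d : ℕ) (q p : Polynomial ℂ), q ≠ 0 → q.natDegree ≤ d →
    ∃ (P : Polynomial ℂ) (N : ℕ) (t : Fin N → ℂ) (l : Fin N → ℕ) (c : Fin N → ℂ),
      (∀ k, 0 < l k) ∧ (∀ k, q.eval (t k) = 0) ∧
      ∀ z : ℂ, q.eval z ≠ 0 → p.eval z / q.eval z = P.eval z + ∑ k, c k / (z - t k) ^ l k := by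
  intro d
  induction d with
  | zero =>
    intro q p hq hdeg
    refine ⟨Polynomial.C (q.coeff 0)⁻¹ * p, 0, ![], ![], ![], by simp, by simp, ?_⟩
    intro z hz
    have hqc : q = Polynomial.C (q.coeff 0) := Polynomial.eq_C_of_natDegree_le_zero hdeg
    rw [hqc] at hz ⊢
    simp only [Polynomial.eval_C, Polynomial.eval_mul, Finset.univ_eq_empty,
      Finset.sum_empty, add_zero]
    have : q.coeff 0 ≠ 0 := by simpa using hz
    field_simp
    rw [Polynomial.coeff_C_zero, mul_div_assoc, div_self this, mul_one]
  | succ d ih =>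
    intro q p hq hdeg
    by_cases h0 : q.natDegree = 0
    · exact ih q p hq (by omega)
    -- q has a root a
    have hdq : q.degree ≠ 0 := fun hdc =>
      h0 (Polynomial.natDegree_eq_zero_iff_degree_le_zero.mpr (le_of_eq hdc))
    obtain ⟨a, ha⟩ := IsAlgClosed.exists_root q hdq
    set m := q.rootMultiplicity a with hm
    have hm1 : 1 ≤ m := (Polynomial.le_rootMultiplicity_iff hq).mpr (by
      simpa using Polynomial.dvd_iff_isRoot.mpr ha)
    set q₁ := q /ₘ (X - Polynomial.C a) ^ m with hq₁
    have hqfac : (X - Polynomial.C a) ^ m * q₁ = q :=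
      Polynomial.pow_mul_divByMonic_rootMultiplicity_eq q a
    have hq₁a : q₁.eval a ≠ 0 := Polynomial.eval_divByMonic_pow_rootMultiplicity_ne_zero a hq
    have hq₁0 : q₁ ≠ 0 := fun h => hq₁a (by rw [h]; simp)
    set c := p.eval a / q₁.eval a with hc
    have hroot : (p - Polynomial.C c * q₁).IsRoot a := by
      simp [Polynomial.IsRoot, hc]
      field_simp
      ring
    obtain ⟨p₁, hp₁⟩ := Polynomial.dvd_iff_isRoot.mpr hroot
    set q' := (X - Polynomial.C a) ^ (m - 1) * q₁ with hq'def
    have hq'0 : q' ≠ 0 := mul_ne_zero (pow_ne_zero _ (Polynomial.X_sub_C_ne_zero a)) hq₁0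
    have hqq' : q = (X - Polynomial.C a) * q' := by
      rw [hq'def, ← mul_assoc, ← pow_succ']
      rw [Nat.sub_add_cancel hm1]
      exact hqfac.symm
    have hdeg' : q'.natDegree ≤ d := by
      have hmul := Polynomial.natDegree_mul (Polynomial.X_sub_C_ne_zero a) hq'0
      rw [hqq', hmul, Polynomial.natDegree_X_sub_C] at hdeg
      omega
    obtain ⟨P, N, t, l, cs, hl, hroots, hsum⟩ := ih q' p₁ hq'0 hdeg'
    refine ⟨P, N + 1, Fin.cons a t, Fin.cons m l, Fin.cons c cs, ?_, ?_, ?_⟩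
    · intro k
      refine Fin.cases ?_ ?_ k
      · show 0 < m; omega
      · intro i; simpa using hl i
    · intro k
      refine Fin.cases ?_ ?_ k
      · simpa using ha
      · intro i
        have := hroots i
        -- roots of q' are roots of q
        simp only [Fin.cons_succ]
        rw [hqq', Polynomial.eval_mul, this, mul_zero]
    · intro z hz
      have hz' : q'.eval z ≠ 0 := by
        intro h; apply hz; rw [hqq', Polynomial.eval_mul, h, mul_zero]
      have hzt : z ≠ a := by
        intro h; subst h;
        apply hz
        rw [← hqfac, Polynomial.eval_mul]
        simp [Polynomial.eval_pow, hm1]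
        left; omega
      have hz1 : q₁.eval z ≠ 0 := by
        intro h; apply hz'; rw [hq'def, Polynomial.eval_mul, h, mul_zero]
      have key : p.eval z / q.eval z = c / (z - a) ^ m + p₁.eval z / q'.eval z := by
        have hpz : p.eval z = c * q₁.eval z + (z - a) * p₁.eval z := by
          have := congrArg (Polynomial.eval z) hp₁
          simp at this
          linear_combination this
        rw [hpz, ← hqfac, hq'def]
        have hza : (z - a) ≠ 0 := sub_ne_zero.mpr hzt
        have e1 : Polynomial.eval z ((X - Polynomial.C a) ^ m) = (z - a) ^ m := by simp
        have e2 : Polynomial.eval z ((X - Polynomial.C a) ^ (m-1) * q₁)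
            = (z - a) ^ (m-1) * q₁.eval z := by simp
        rw [Polynomial.eval_mul, e1, e2]
        have hpow : (z - a) ^ m = (z - a) * (z - a) ^ (m - 1) := by
          rw [← pow_succ']
          congr 1
          omega
        rw [hpow]
        field_simp
      rw [key, hsum z hz']
      rw [Fin.sum_univ_succ]
      simp only [Fin.cons_zero, Fin.cons_succ]
      ring


lemma pf_grouped (q p : Polynomial ℂ) (hq : q ≠ 0) :
    ∃ (P : Polynomial ℂ) (S : Finset (ℂ × ℕ)) (D : ℂ × ℕ → ℂ),
      (∀ x ∈ S, 0 < x.2 ∧ q.eval x.1 = 0 ∧ D x ≠ 0) ∧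
      ∀ z : ℂ, q.eval z ≠ 0 →
        p.eval z / q.eval z = P.eval z + ∑ x ∈ S, D x / (z - x.1) ^ x.2 := by
  obtain ⟨P, N, t, l, c, hl, hroots, hsum⟩ := pf_decomp q.natDegree q p hq le_rfl
  classical
  set g : Fin N → ℂ × ℕ := fun k => (t k, l k) with hg
  set D : ℂ × ℕ → ℂ := fun x => ∑ k ∈ Finset.univ.filter (fun k => g k = x), c k with hD
  set S : Finset (ℂ × ℕ) := (Finset.univ.image g).filter (fun x => D x ≠ 0) with hS
  refine ⟨P, S, D, ?_, ?_⟩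
  · rintro ⟨a, b⟩ hx
    rw [hS, Finset.mem_filter, Finset.mem_image] at hx
    obtain ⟨⟨k, _, hk⟩, hDx⟩ := hx
    refine ⟨?_, ?_, hDx⟩
    · have := hl k; rw [hg] at hk
      cases hk; exact this
    · have := hroots k; rw [hg] at hk; cases hk; exact this
  · intro z hz
    rw [hsum z hz]
    congr 1
    have key : ∑ x ∈ Finset.univ.image g, D x / (z - x.1) ^ x.2
        = ∑ k : Fin N, c k / (z - t k) ^ l k := by
      rw [← Finset.sum_fiberwise_of_maps_to (g := g) (fun k _ => Finset.mem_image_of_mem g (Finset.mem_univ k))]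
      refine Finset.sum_congr rfl ?_
      intro x hx
      rw [hD, Finset.sum_div]
      refine Finset.sum_congr rfl ?_
      intro k hk
      rw [Finset.mem_filter] at hk
      rw [← hk.2]
    rw [← key, hS]
    refine (Finset.sum_filter_of_ne ?_).symm
    intro x hx hne hDx
    exact hne (by rw [hDx]; simp)


lemma tendsto_pole (P : Polynomial ℂ) (S : Finset (ℂ × ℕ)) (D : ℂ × ℕ → ℂ)
    (a : ℂ) (m : ℕ) (hm1 : 0 < m) (hmax : ∀ x ∈ S, x.1 = a → x.2 ≤ m) :
    Filter.Tendsto (fun z : ℂ => (z - a) ^ m * (P.eval z + ∑ x ∈ S, D x / (z - x.1) ^ x.2))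
      (𝓝[≠] a) (𝓝 (if (a, m) ∈ S then D (a, m) else 0)) := by
  classical
  have hcongr : ∀ z : ℂ, (z - a) ^ m * (P.eval z + ∑ x ∈ S, D x / (z - x.1) ^ x.2)
      = (z - a) ^ m * P.eval z + ∑ x ∈ S, (z - a) ^ m * (D x / (z - x.1) ^ x.2) := by
    intro z; rw [mul_add, Finset.mul_sum]
  simp only [hcongr]
  have h0 : Filter.Tendsto (fun z : ℂ => (z - a) ^ m * P.eval z) (𝓝[≠] a) (𝓝 0) := by
    have cont : Continuous fun z : ℂ => (z - a) ^ m * P.eval z :=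
      (((continuous_id.sub continuous_const)).pow m).mul P.continuous
    have := cont.tendsto a
    rw [sub_self, zero_pow hm1.ne', zero_mul] at this
    exact this.mono_left nhdsWithin_le_nhds
  have hterm : ∀ x ∈ S, Filter.Tendsto (fun z : ℂ => (z - a) ^ m * (D x / (z - x.1) ^ x.2))
      (𝓝[≠] a) (𝓝 (if x = (a, m) then D (a, m) else 0)) := by
    rintro ⟨b, l⟩ hx
    by_cases hb : b = a
    · subst hb
      have hlm : l ≤ m := hmax (b, l) hx rfl
      by_cases hlm' : l = m
      · subst hlm'
        rw [if_pos rfl]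
        refine Filter.Tendsto.congr' ?_ tendsto_const_nhds
        filter_upwards [self_mem_nhdsWithin] with z hz
        have hne : (z - b) ^ l ≠ 0 := pow_ne_zero _ (sub_ne_zero.mpr hz)
        field_simp
      · have hlt : l < m := lt_of_le_of_ne hlm hlm'
        rw [if_neg (by simp [Prod.ext_iff]; intro _; omega)]
        have hlim : Filter.Tendsto (fun z : ℂ => D (b, l) * (z - b) ^ (m - l)) (𝓝 b)
            (𝓝 (D (b, l) * (b - b) ^ (m - l))) :=
          (continuous_const.mul ((continuous_id.sub continuous_const).pow _)).tendsto b
        rw [sub_self, zero_pow (by omega), mul_zero] at hlim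
        refine Filter.Tendsto.congr' ?_ (hlim.mono_left nhdsWithin_le_nhds)
        filter_upwards [self_mem_nhdsWithin] with z hz
        have hne : (z - b) ≠ 0 := sub_ne_zero.mpr hz
        have hp : (z - b) ^ m = (z - b) ^ (m - l) * (z - b) ^ l := by
          rw [← pow_add]; congr 1; omega
        rw [hp]
        field_simp
    · rw [if_neg (by simp [Prod.ext_iff, hb])]
      have hlim : Filter.Tendsto (fun z : ℂ => (z - a) ^ m * (D (b, l) / (z - b) ^ l)) (𝓝 a)
          (𝓝 ((a - a) ^ m * (D (b, l) / (a - b) ^ l))) := by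
        refine Filter.Tendsto.mul (((continuous_id.sub continuous_const).pow m).tendsto a) ?_
        refine Filter.Tendsto.div tendsto_const_nhds
          (((continuous_id.sub continuous_const).pow l).tendsto a) ?_
        exact pow_ne_zero _ (sub_ne_zero.mpr (Ne.symm hb))
      rw [sub_self, zero_pow hm1.ne', zero_mul] at hlim
      exact hlim.mono_left nhdsWithin_le_nhds
  have hsum := tendsto_finset_sum S hterm
  have hfin := h0.add hsum
  rw [zero_add] at hfin
  rwa [Finset.sum_ite_eq' S (a, m) (fun _ => D (a, m))] at hfin


lemma norm_ray_atTop (e b : ℂ) (he : e ≠ 0) (l d : ℕ) (hl : 0 < l) :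
    Filter.Tendsto (fun y : ℝ => ‖((y : ℂ) * e - b) ^ l * (y : ℂ) ^ d‖) atTop atTop := by
  have hray : Filter.Tendsto (fun y : ℝ => ‖(y : ℂ) * e - b‖) atTop atTop := by
    have h1 : Filter.Tendsto (fun y : ℝ => y * ‖e‖) atTop atTop :=
      Filter.Tendsto.atTop_mul_const (norm_pos_iff.mpr he) tendsto_id
    have hlow : Filter.Tendsto (fun y : ℝ => y * ‖e‖ - ‖b‖) atTop atTop :=
      tendsto_atTop_add_const_right _ _ h1
    refine tendsto_atTop_mono' atTop ?_ hlow
    filter_upwards [eventually_ge_atTop (0:ℝ)] with y hy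
    calc y * ‖e‖ - ‖b‖ = ‖(y:ℂ) * e‖ - ‖b‖ := by
          rw [norm_mul, Complex.norm_real, Real.norm_of_nonneg hy]
      _ ≤ ‖(y:ℂ) * e - b‖ := by
          have := norm_sub_norm_le ((y:ℂ)*e) b
          linarith [this]
  refine tendsto_atTop_mono' atTop ?_ hray
  filter_upwards [hray.eventually_ge_atTop 1, eventually_ge_atTop (1:ℝ)] with y h1 hy
  rw [norm_mul, norm_pow, norm_pow, Complex.norm_real, Real.norm_of_nonneg (by linarith)]
  calc ‖(y:ℂ)*e - b‖ ≤ ‖(y:ℂ)*e - b‖ ^ l := le_self_pow₀ h1 hl.ne'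
    _ ≤ ‖(y:ℂ)*e - b‖ ^ l * y ^ d := by
        nlinarith [pow_nonneg (le_trans zero_le_one h1) l, one_le_pow₀ (n := d) hy]

lemma tendsto_ray_atTop (P : Polynomial ℂ) (S : Finset (ℂ × ℕ)) (D : ℂ × ℕ → ℂ)
    (hS : ∀ x ∈ S, 0 < x.2) (e : ℂ) (he : e ≠ 0) (d : ℕ) (hd : P.natDegree ≤ d) :
    Filter.Tendsto
      (fun y : ℝ => (P.eval ((y : ℂ) * e) + ∑ x ∈ S, D x / ((y : ℂ) * e - x.1) ^ x.2) / (y : ℂ) ^ d)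
      atTop (𝓝 (P.coeff d * e ^ d)) := by
  have hcongr : ∀ y : ℝ,
      (P.eval ((y:ℂ)*e) + ∑ x ∈ S, D x / ((y:ℂ)*e - x.1) ^ x.2) / (y:ℂ) ^ d
      = P.eval ((y:ℂ)*e) / (y:ℂ)^d + ∑ x ∈ S, (D x / ((y:ℂ)*e - x.1) ^ x.2) / (y:ℂ)^d := by
    intro y; rw [add_div, Finset.sum_div]
  simp only [hcongr]
  have hpoles : Filter.Tendsto
      (fun y : ℝ => ∑ x ∈ S, (D x / ((y:ℂ)*e - x.1) ^ x.2) / (y:ℂ)^d) atTop (𝓝 0) := by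
    have : Filter.Tendsto
        (fun y : ℝ => ∑ x ∈ S, D x / (((y:ℂ)*e - x.1) ^ x.2 * (y:ℂ)^d)) atTop (𝓝 0) := by
      rw [show (0:ℂ) = ∑ x ∈ S, 0 by simp]
      refine tendsto_finset_sum S ?_
      rintro ⟨b, l⟩ hx
      have hnorm := norm_ray_atTop e b he l d (hS (b,l) hx)
      rw [tendsto_zero_iff_norm_tendsto_zero]
      simp only [norm_div]
      exact Filter.Tendsto.div_atTop tendsto_const_nhds hnorm
    refine this.congr ?_
    intro y
    refine Finset.sum_congr rfl fun x _ => ?_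
    rw [div_div]
  have hpoly : Filter.Tendsto (fun y : ℝ => P.eval ((y:ℂ)*e) / (y:ℂ)^d) atTop
      (𝓝 (P.coeff d * e ^ d)) := by
    have heval : ∀ y : ℝ, P.eval ((y:ℂ)*e) / (y:ℂ)^d
        = ∑ j ∈ Finset.range (d+1), P.coeff j * e ^ j * ((y:ℂ)^j / (y:ℂ)^d) := by
      intro y
      rw [Polynomial.eval_eq_sum_range' (Nat.lt_succ_of_le hd), Finset.sum_div]
      refine Finset.sum_congr rfl fun j _ => ?_
      rw [mul_pow]
      ring
    simp only [heval]
    have hterm : ∀ j ∈ Finset.range (d+1), Filter.Tendsto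
        (fun y : ℝ => P.coeff j * e ^ j * ((y:ℂ)^j / (y:ℂ)^d)) atTop
        (𝓝 (if j = d then P.coeff d * e ^ d else 0)) := by
      intro j hj
      rw [Finset.mem_range] at hj
      by_cases hjd : j = d
      · subst hjd
        rw [if_pos rfl]
        refine Filter.Tendsto.congr' ?_ tendsto_const_nhds
        filter_upwards [eventually_gt_atTop (0:ℝ)] with y hy
        have : ((y:ℂ))^j ≠ 0 := pow_ne_zero _ (by exact_mod_cast hy.ne')
        field_simp
      · rw [if_neg hjd]
        have hjd' : j < d := by omega
        have hr : Filter.Tendsto (fun y : ℝ => y^j / y^d) atTop (𝓝 0) :=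
          tendsto_pow_div_pow_atTop_zero hjd'
        have hc : Filter.Tendsto (fun y : ℝ => ((y^j / y^d : ℝ) : ℂ)) atTop (𝓝 0) := by
          rw [show ((0:ℂ)) = ((0:ℝ):ℂ) by simp]
          exact (Complex.continuous_ofReal.tendsto 0).comp hr
        have := hc.const_mul (P.coeff j * e ^ j)
        rw [mul_zero] at this
        refine this.congr ?_
        intro y
        push_cast
        ring
    have := tendsto_finset_sum (Finset.range (d+1)) hterm
    rwa [Finset.sum_ite_eq' (Finset.range (d+1)) d
      (fun _ => P.coeff d * e ^ d), if_pos (Finset.self_mem_range_succ d)] at this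
  have := hpoly.add hpoles
  rwa [add_zero] at this


lemma gym1 (C : ℂ) (h : ∀ θ ∈ Set.Ioo (0:ℝ) π, 0 ≤ C.im * Real.cos θ - C.re * Real.sin θ) :
    C.im = 0 ∧ C.re ≤ 0 := by
  have hcont : Continuous fun θ : ℝ => C.im * Real.cos θ - C.re * Real.sin θ := by
    continuity
  have hmem0 : ∀ᶠ θ in 𝓝[>] (0:ℝ), θ ∈ Set.Ioo (0:ℝ) π := by
    filter_upwards [self_mem_nhdsWithin,
      ((gt_mem_nhds Real.pi_pos : ∀ᶠ x in 𝓝 (0:ℝ), x < π).filter_mono nhdsWithin_le_nhds)]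
      with θ h1 h2
    exact ⟨h1, h2⟩
  have him1 : 0 ≤ C.im := by
    have hlim : Filter.Tendsto (fun θ : ℝ => C.im * Real.cos θ - C.re * Real.sin θ)
        (𝓝[>] (0:ℝ)) (𝓝 C.im) := by
      have := (hcont.tendsto 0).mono_left (nhdsWithin_le_nhds (s := Set.Ioi (0:ℝ)))
      simpa using this
    exact ge_of_tendsto hlim (by filter_upwards [hmem0] with θ hθ using h θ hθ)
  have hmemπ : ∀ᶠ θ in 𝓝[<] π, θ ∈ Set.Ioo (0:ℝ) π := by
    filter_upwards [self_mem_nhdsWithin,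
      ((lt_mem_nhds Real.pi_pos : ∀ᶠ x in 𝓝 π, 0 < x).filter_mono nhdsWithin_le_nhds)]
      with θ h1 h2
    exact ⟨h2, h1⟩
  have him2 : 0 ≤ -C.im := by
    have hlim : Filter.Tendsto (fun θ : ℝ => C.im * Real.cos θ - C.re * Real.sin θ)
        (𝓝[<] π) (𝓝 (-C.im)) := by
      have := (hcont.tendsto π).mono_left (nhdsWithin_le_nhds (s := Set.Iio π))
      simpa using this
    exact ge_of_tendsto hlim (by filter_upwards [hmemπ] with θ hθ using h θ hθ)
  have him : C.im = 0 := le_antisymm (by linarith) him1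
  refine ⟨him, ?_⟩
  have := h (π/2) ⟨by positivity, by linarith [Real.pi_pos]⟩
  rw [Real.cos_pi_div_two, Real.sin_pi_div_two] at this
  linarith

lemma gym2 (m : ℕ) (hm : 2 ≤ m) (C : ℂ)
    (h : ∀ θ ∈ Set.Ioo (0:ℝ) π, 0 ≤ C.im * Real.cos (m * θ) - C.re * Real.sin (m * θ)) :
    C = 0 := by
  have hm0 : (0:ℝ) < m := by positivity
  have hπ := Real.pi_pos
  have key : ∀ φ : ℝ, 0 < φ → φ < m * π → 0 ≤ C.im * Real.cos φ - C.re * Real.sin φ := by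
    intro φ h1 h2
    have := h (φ / m) ⟨by positivity, by rw [div_lt_iff₀ hm0]; linarith [mul_comm π (m:ℝ)]⟩
    rwa [mul_div_cancel₀ _ hm0.ne'] at this
  have hmπ : 2 * π ≤ m * π := by
    have : (2:ℝ) ≤ m := by exact_mod_cast hm
    nlinarith
  have h1 := key (π/2) (by positivity) (by linarith)
  rw [Real.cos_pi_div_two, Real.sin_pi_div_two] at h1
  have h2 := key (π + π/2) (by positivity) (by linarith)
  rw [Real.cos_add, Real.sin_add, Real.cos_pi, Real.sin_pi, Real.cos_pi_div_two,
    Real.sin_pi_div_two] at h2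
  have hre : C.re = 0 := by linarith [h1, h2]
  have h3 := key (π/3) (by positivity) (by linarith)
  rw [Real.cos_pi_div_three, Real.sin_pi_div_three, hre] at h3
  have h4 := key (π - π/3) (by linarith) (by linarith)
  rw [Real.cos_pi_sub, Real.sin_pi_sub, Real.cos_pi_div_three, Real.sin_pi_div_three, hre] at h4
  have him : C.im = 0 := by linarith
  exact Complex.ext hre him
lemma tendsto_ray_base (a e : ℂ) (he : e ≠ 0) :
    Filter.Tendsto (fun y : ℝ => a + (y:ℂ)*e) (𝓝[>] (0:ℝ)) (𝓝[≠] a) := by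
  rw [tendsto_nhdsWithin_iff]
  constructor
  · have hc : Filter.Tendsto (fun y : ℝ => a + (y:ℂ)*e) (𝓝 0) (𝓝 (a + ((0:ℝ):ℂ)*e)) :=
      (continuous_const.add (Complex.continuous_ofReal.mul continuous_const)).tendsto 0
    rw [Complex.ofReal_zero, zero_mul, add_zero] at hc
    exact hc.mono_left nhdsWithin_le_nhds
  · filter_upwards [self_mem_nhdsWithin] with y hy
    simp only [Set.mem_compl_iff, Set.mem_singleton_iff]
    intro hcon
    have : (y:ℂ) * e = 0 := by linear_combination hcon
    rcases mul_eq_zero.mp this with h | h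
    · have hy0 : y = 0 := by exact_mod_cast h
      exact (ne_of_gt (Set.mem_Ioi.mp hy)) hy0
    · exact he h

lemma pole_analysis (f : ℂ → ℂ) (hanal : AnalyticOnNhd ℂ f SDom)
    (himf : ∀ z : ℂ, 0 < z.im → 0 < (f z).im)
    (P : Polynomial ℂ) (S : Finset (ℂ × ℕ)) (D : ℂ × ℕ → ℂ) (q : Polynomial ℂ) (hq : q ≠ 0)
    (hSprop : ∀ x ∈ S, 0 < x.2 ∧ q.eval x.1 = 0 ∧ D x ≠ 0)
    (hsum : ∀ z ∈ SDom, q.eval z ≠ 0 → f z = P.eval z + ∑ x ∈ S, D x / (z - x.1) ^ x.2) :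
    ∀ x ∈ S, x.1.im = 0 ∧ 0 ≤ x.1.re ∧ x.2 = 1 ∧
      (D (x.1, 1)).im = 0 ∧ (D (x.1, 1)).re < 0 := by
  classical
  rintro ⟨a, b⟩ hx
  set B : Finset ℕ := (S.filter (fun x => x.1 = a)).image Prod.snd with hB
  have hBne : B.Nonempty := by
    refine ⟨b, ?_⟩
    rw [hB, Finset.mem_image]
    exact ⟨(a, b), Finset.mem_filter.mpr ⟨hx, rfl⟩, rfl⟩
  set m := B.max' hBne with hmdef
  have hmB : m ∈ B := B.max'_mem hBne
  have ham : (a, m) ∈ S := by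
    rw [hB, Finset.mem_image] at hmB
    obtain ⟨x', hx', hxm⟩ := hmB
    rw [Finset.mem_filter] at hx'
    have : x' = (a, m) := Prod.ext hx'.2 hxm
    exact this ▸ hx'.1
  have hm1 : 0 < m := (hSprop (a, m) ham).1
  have hmax : ∀ x' ∈ S, x'.1 = a → x'.2 ≤ m :=
    fun x' hx' h1 => B.le_max' x'.2 (by
      rw [hB, Finset.mem_image]
      exact ⟨x', Finset.mem_filter.mpr ⟨hx', h1⟩, rfl⟩)
  have hlim0 := tendsto_pole P S D a m hm1 hmax
  rw [if_pos ham] at hlim0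
  -- generic ray limit for the partial-fraction function F
  have hrayF : ∀ e : ℂ, e ≠ 0 → Filter.Tendsto
      (fun y : ℝ => ((y:ℂ)*e)^m * (P.eval (a + (y:ℂ)*e) + ∑ x ∈ S, D x / ((a + (y:ℂ)*e) - x.1) ^ x.2))
      (𝓝[>] (0:ℝ)) (𝓝 (D (a, m))) := by
    intro e he
    have := tendsto_ray_pole hlim0 e he
    refine this.congr fun y => ?_
    congr 2
    ring
  -- eventually q ≠ 0 on rays
  have hevq : ∀ e : ℂ, e ≠ 0 → ∀ᶠ y : ℝ in 𝓝[>] (0:ℝ), q.eval (a + (y:ℂ)*e) ≠ 0 := by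
    intro e he
    have := eventually_not_mem_finite_nhdsGT (finite_ray_roots q hq a e he)
    filter_upwards [this] with y hy
    exact hy
  -- Step 1 : a is on the cut
  have haS : 0 ≤ a.re ∧ a.im = 0 := by
    by_contra hcon
    have haD : a ∈ SDom := hcon
    have hevS : ∀ᶠ y : ℝ in 𝓝[>] (0:ℝ), a + (y:ℂ)*1 ∈ SDom :=
      ((tendsto_ray_base a 1 one_ne_zero).mono_right nhdsWithin_le_nhds).eventually
        (isOpen_SDom.eventually_mem haD)
    have hlimf : Filter.Tendsto (fun y : ℝ => ((y:ℂ)*1)^m * f (a + (y:ℂ)*1))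
        (𝓝[>] (0:ℝ)) (𝓝 (D (a, m))) := by
      refine (hrayF 1 one_ne_zero).congr' ?_
      filter_upwards [hevS, hevq 1 one_ne_zero] with y h1 h2
      rw [hsum _ h1 h2]
    have hlim0' : Filter.Tendsto (fun y : ℝ => ((y:ℂ)*1)^m * f (a + (y:ℂ)*1))
        (𝓝[>] (0:ℝ)) (𝓝 0) := by
      have h1 : Filter.Tendsto (fun y : ℝ => ((y:ℂ)*1)^m) (𝓝[>] (0:ℝ)) (𝓝 0) := by
        have hc : Filter.Tendsto (fun y : ℝ => ((y:ℂ)*1)^m) (𝓝 0) (𝓝 (((((0:ℝ):ℂ))*1)^m)) :=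
          ((Complex.continuous_ofReal.mul continuous_const).pow m).tendsto 0
        rw [Complex.ofReal_zero, zero_mul, zero_pow hm1.ne'] at hc
        exact hc.mono_left nhdsWithin_le_nhds
      have h2 : Filter.Tendsto (fun y : ℝ => f (a + (y:ℂ)*1)) (𝓝[>] (0:ℝ)) (𝓝 (f a)) := by
        have hcf : ContinuousAt f a := (hanal a haD).continuousAt
        exact hcf.tendsto.comp
          ((tendsto_ray_base a 1 one_ne_zero).mono_right nhdsWithin_le_nhds)
      have := h1.mul h2
      rwa [zero_mul] at this
    have : D (a, m) = 0 := tendsto_nhds_unique hlimf hlim0'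
    exact (hSprop (a, m) ham).2.2 this
  -- Step 2 : the angular inequality
  have hIm : ∀ θ ∈ Set.Ioo (0:ℝ) π,
      0 ≤ (D (a,m)).im * Real.cos (m * θ) - (D (a,m)).re * Real.sin (m * θ) := by
    intro θ hθ
    set e := Complex.exp ((θ:ℂ) * I) with hedef
    have he : e ≠ 0 := Complex.exp_ne_zero _
    have hsin : 0 < Real.sin θ := Real.sin_pos_of_pos_of_lt_pi hθ.1 hθ.2
    have heim : e.im = Real.sin θ := Complex.exp_ofReal_mul_I_im θ
    have hmemS : ∀ y : ℝ, 0 < y → 0 < (a + (y:ℂ)*e).im := by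
      intro y hy
      rw [Complex.add_im, haS.2, zero_add]
      rw [show ((y:ℂ)*e).im = y * e.im from by
        rw [Complex.mul_im]; simp]
      rw [heim]; positivity
    have hlimf : Filter.Tendsto (fun y : ℝ => ((y:ℂ)*e)^m * f (a + (y:ℂ)*e))
        (𝓝[>] (0:ℝ)) (𝓝 (D (a, m))) := by
      refine (hrayF e he).congr' ?_
      filter_upwards [hevq e he, self_mem_nhdsWithin] with y h2 hy
      rw [hsum _ (mem_SDom_of_im_pos (hmemS y hy)) h2]
    have hem : e ^ m ≠ 0 := pow_ne_zero _ he
    have hlim3 : Filter.Tendsto (fun y : ℝ => ((y:ℂ))^m * f (a + (y:ℂ)*e))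
        (𝓝[>] (0:ℝ)) (𝓝 (D (a, m) * (e ^ m)⁻¹)) := by
      have := hlimf.mul_const (e ^ m)⁻¹
      refine this.congr fun y => ?_
      rw [mul_pow]
      field_simp
    have him4 : Filter.Tendsto (fun y : ℝ => (((y:ℂ))^m * f (a + (y:ℂ)*e)).im)
        (𝓝[>] (0:ℝ)) (𝓝 ((D (a, m) * (e ^ m)⁻¹).im)) :=
      (Complex.continuous_im.tendsto _).comp hlim3
    have hge : 0 ≤ (D (a, m) * (e ^ m)⁻¹).im := by
      refine ge_of_tendsto him4 ?_
      filter_upwards [self_mem_nhdsWithin] with y hy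
      have hy' : (0:ℝ) < y := hy
      have h1 : (((y:ℂ))^m * f (a + (y:ℂ)*e)).im = y^m * (f (a + (y:ℂ)*e)).im := by
        rw [← Complex.ofReal_pow, Complex.im_ofReal_mul]
      rw [h1]
      have := himf _ (hmemS y hy')
      positivity
    have hexp : e ^ m = Complex.exp (((m * θ : ℝ):ℂ) * I) := by
      rw [hedef, ← Complex.exp_nat_mul]
      congr 1
      push_cast
      ring
    rwa [hexp, im_exp_neg_mul (m*θ) (D (a,m))] at hge
  -- Step 3 : m = 1 and negativity
  have hm1' : m = 1 := by
    by_contra hm2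
    have : 2 ≤ m := by omega
    exact (hSprop (a, m) ham).2.2 (gym2 m this (D (a,m)) hIm)
  rw [hm1'] at hIm ham
  have hgym := gym1 (D (a,1)) (by
    intro θ hθ
    have := hIm θ hθ
    simpa using this)
  refine ⟨haS.2, haS.1, ?_, hgym.1, ?_⟩
  · have hble : b ≤ m := hmax (a, b) hx rfl
    have : 0 < b := (hSprop (a, b) hx).1
    omega
  · rcases lt_or_eq_of_le hgym.2 with h | h
    · exact h
    · exfalso
      apply (hSprop (a,1) ham).2.2
      exact Complex.ext (by simpa using h) (by simpa using hgym.1)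
lemma poly_analysis (f : ℂ → ℂ)
    (himf : ∀ z : ℂ, 0 < z.im → 0 < (f z).im)
    (hpos : ∀ x : ℝ, x < 0 → ∃ r : ℝ, 0 < r ∧ f (x:ℂ) = (r:ℂ))
    (P : Polynomial ℂ) (S : Finset (ℂ × ℕ)) (D : ℂ × ℕ → ℂ) (q : Polynomial ℂ) (hq : q ≠ 0)
    (hS2 : ∀ x ∈ S, 0 < x.2)
    (hsum : ∀ z ∈ SDom, q.eval z ≠ 0 → f z = P.eval z + ∑ x ∈ S, D x / (z - x.1) ^ x.2) :
    P.natDegree = 0 ∧ (P.coeff 0).im = 0 ∧ 0 ≤ (P.coeff 0).re := by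
  set d := P.natDegree with hd
  -- transfer of the ray limit to f
  have hfray : ∀ e : ℂ, e ≠ 0 → (∀ y : ℝ, 0 < y → ((y:ℂ)*e) ∈ SDom) →
      ∀ d' : ℕ, P.natDegree ≤ d' →
      Filter.Tendsto (fun y : ℝ => f ((y:ℂ)*e) / (y:ℂ)^d') atTop
        (𝓝 (P.coeff d' * e ^ d')) := by
    intro e he hdom d' hd'
    refine (tendsto_ray_atTop P S D hS2 e he d' hd').congr' ?_
    filter_upwards [eventually_gt_atTop (0:ℝ),
      eventually_not_mem_finite_atTop (finite_ray_roots' q hq e he)] with y hy hq'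
    rw [hsum _ (hdom y hy) hq']
  have hdomneg : ∀ y : ℝ, 0 < y → ((y:ℂ)*(-1):ℂ) ∈ SDom := by
    intro y hy
    apply mem_SDom_of_re_neg
    simp [Complex.mul_re]
    linarith
  have hd0 : d = 0 := by
    by_contra hd1
    have hd1' : 1 ≤ d := by omega
    have hP0 : P ≠ 0 := fun h => hd1 (by rw [hd, h]; simp)
    have hc : P.coeff d ≠ 0 := by
      rw [hd, Polynomial.coeff_natDegree]
      exact Polynomial.leadingCoeff_ne_zero.mpr hP0
    set c := P.coeff d with hcdef
    have hIm : ∀ θ ∈ Set.Ioo (0:ℝ) π,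
        0 ≤ c.im * Real.cos (d * θ) + c.re * Real.sin (d * θ) := by
      intro θ hθ
      set e := Complex.exp ((θ:ℂ) * I) with hedef
      have he : e ≠ 0 := Complex.exp_ne_zero _
      have hsin : 0 < Real.sin θ := Real.sin_pos_of_pos_of_lt_pi hθ.1 hθ.2
      have hdom : ∀ y : ℝ, 0 < y → ((y:ℂ)*e) ∈ SDom := by
        intro y hy
        apply mem_SDom_of_im_pos
        rw [Complex.im_ofReal_mul, hedef, Complex.exp_ofReal_mul_I_im]
        positivity
      have hlim := hfray e he hdom d le_rfl
      have hlimim := (Complex.continuous_im.tendsto _).comp hlim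
      have hge : 0 ≤ (c * e ^ d).im := by
        refine ge_of_tendsto hlimim ?_
        filter_upwards [eventually_gt_atTop (0:ℝ)] with y hy
        have hrw : (f ((y:ℂ)*e) / (y:ℂ)^d).im = (y^d)⁻¹ * (f ((y:ℂ)*e)).im := by
          rw [div_eq_mul_inv, ← Complex.ofReal_pow, ← Complex.ofReal_inv, mul_comm,
            Complex.im_ofReal_mul]
        simp only [Function.comp_apply]
        rw [hrw]
        have him := himf ((y:ℂ)*e) (by
          rw [Complex.im_ofReal_mul, hedef, Complex.exp_ofReal_mul_I_im]; positivity)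
        positivity
      have hexp : e ^ d = Complex.exp (((d * θ : ℝ):ℂ) * I) := by
        rw [hedef, ← Complex.exp_nat_mul]
        congr 1
        push_cast
        ring
      rwa [hexp, im_mul_exp (d*θ) c] at hge
    set c' : ℂ := ⟨-c.re, c.im⟩ with hc'def
    have hgymh : ∀ θ ∈ Set.Ioo (0:ℝ) π,
        0 ≤ c'.im * Real.cos (d * θ) - c'.re * Real.sin (d * θ) := by
      intro θ hθ
      have := hIm θ hθ
      simp only [hc'def]
      simpa using this
    by_cases hd2 : 2 ≤ d
    · have := gym2 d hd2 c' hgymh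
      apply hc
      have h1 : c.re = 0 := by
        have := congrArg Complex.re this
        simp [hc'def] at this
        linarith
      have h2 : c.im = 0 := by
        have := congrArg Complex.im this
        simpa [hc'def] using this
      exact Complex.ext h1 h2
    · -- d = 1
      have hdeq : d = 1 := by omega
      have hgym := gym1 c' (by
        intro θ hθ
        have := hgymh θ hθ
        rw [hdeq] at this
        simpa using this)
      have hcim : c.im = 0 := hgym.1
      have hcre : 0 < c.re := by
        rcases lt_or_eq_of_le (by simpa [hc'def] using hgym.2 : 0 ≤ c.re) with h | h
        · exact h
        · exact absurd (Complex.ext h.symm hcim) hc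
      -- negative real axis gives a contradiction
      have hlim := hfray (-1) (by norm_num) hdomneg d le_rfl
      have hlimre := (Complex.continuous_re.tendsto _).comp hlim
      have hge : 0 ≤ (c * (-1) ^ d).re := by
        refine ge_of_tendsto hlimre ?_
        filter_upwards [eventually_gt_atTop (0:ℝ)] with y hy
        obtain ⟨r, hr, hfr⟩ := hpos (-y) (by linarith)
        have : ((y:ℂ)*(-1)) = (((-y : ℝ)):ℂ) := by push_cast; ring
        simp only [Function.comp_apply]
        rw [this, hfr]
        have hrw : ((r:ℂ) / (y:ℂ)^d).re = r / y^d := by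
          rw [← Complex.ofReal_pow, ← Complex.ofReal_div]
          exact Complex.ofReal_re _
        rw [hrw]
        positivity
      rw [hdeq] at hge
      simp at hge
      linarith
  -- now the constant term
  have hlim := hfray (-1) (by norm_num) hdomneg 0 (le_of_eq hd0)
  have hlim' : Filter.Tendsto (fun y : ℝ => f (((-y:ℝ)):ℂ)) atTop (𝓝 (P.coeff 0)) := by
    have := hlim
    simp only [pow_zero, div_one, mul_one] at this
    refine this.congr fun y => ?_
    congr 1
    push_cast
    ring
  constructor
  · exact hd0
  constructor
  · have him := (Complex.continuous_im.tendsto _).comp hlim'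
    have hev : ∀ᶠ y : ℝ in atTop, (f (((-y:ℝ)):ℂ)).im = 0 := by
      filter_upwards [eventually_gt_atTop (0:ℝ)] with y hy
      obtain ⟨r, hr, hfr⟩ := hpos (-y) (by linarith)
      rw [hfr]
      exact Complex.ofReal_im r
    have : Filter.Tendsto (fun y : ℝ => (0:ℝ)) atTop (𝓝 ((P.coeff 0).im)) :=
      him.congr' (by filter_upwards [hev] with y h using h)
    exact tendsto_nhds_unique this tendsto_const_nhds
  · have hre := (Complex.continuous_re.tendsto _).comp hlim'
    refine ge_of_tendsto hre ?_
    filter_upwards [eventually_gt_atTop (0:ℝ)] with y hy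
    obtain ⟨r, hr, hfr⟩ := hpos (-y) (by linarith)
    simp only [Function.comp_apply]
    rw [hfr]
    rw [Complex.ofReal_re]
    exact le_of_lt hr

lemma exists_rep (f : ℂ → ℂ) (hanal : AnalyticOnNhd ℂ f SDom)
    (himf : ∀ z : ℂ, 0 < z.im → 0 < (f z).im)
    (hpos : ∀ x : ℝ, x < 0 → ∃ r : ℝ, 0 < r ∧ f (x:ℂ) = (r:ℂ))
    (p q : Polynomial ℂ) (hq : q ≠ 0)
    (hrat : ∀ z ∈ SDom, f z = p.eval z / q.eval z) :
    ∃ (n : ℕ) (γ : ℝ) (t s : Fin n → ℝ), PFRep f n γ t s := by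
  classical
  obtain ⟨P, S, D, hSprop, hsum0⟩ := pf_grouped q p hq
  have hsum : ∀ z ∈ SDom, q.eval z ≠ 0 →
      f z = P.eval z + ∑ x ∈ S, D x / (z - x.1) ^ x.2 := by
    intro z hz hqz
    rw [hrat z hz, hsum0 z hqz]
  have hpoles := pole_analysis f hanal himf P S D q hq hSprop hsum
  have hpoly := poly_analysis f himf hpos P S D q hq (fun x hx => (hSprop x hx).1) hsum
  set A : Finset ℂ := S.image Prod.fst with hA
  set A' : Finset ℝ := A.image Complex.re with hA'
  set n := A'.card with hn
  set iso := A'.orderIsoOfFin rfl with hiso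
  set t : Fin n → ℝ := fun k => (iso k : ℝ) with ht
  set σ : ℝ → ℝ := fun u => -(D (((u:ℝ):ℂ), 1)).re with hσ
  set s : Fin n → ℝ := fun k => σ (t k) with hs
  set γ : ℝ := (P.coeff 0).re with hγ
  -- facts about A
  have hAmem : ∀ a ∈ A, a.im = 0 ∧ 0 ≤ a.re ∧ (D (a,1)).im = 0 ∧ (D (a,1)).re < 0 := by
    intro a ha
    rw [hA, Finset.mem_image] at ha
    obtain ⟨x, hx, hxa⟩ := ha
    have := hpoles x hx
    rw [hxa] at this
    exact ⟨this.1, this.2.1, this.2.2.2⟩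
  have hA'mem : ∀ u ∈ A', ((u:ℝ):ℂ) ∈ A ∧ 0 ≤ u ∧ 0 < σ u := by
    intro u hu
    rw [hA', Finset.mem_image] at hu
    obtain ⟨a, ha, hau⟩ := hu
    obtain ⟨him, hre, hDim, hDre⟩ := hAmem a ha
    have hac : ((u:ℝ):ℂ) = a := by
      refine Complex.ext ?_ ?_
      · rw [Complex.ofReal_re, ← hau]
      · rw [Complex.ofReal_im, him]
    refine ⟨hac ▸ ha, hau ▸ hre, ?_⟩
    rw [hσ]
    simp only
    rw [hac]
    linarith
  -- t and s facts
  have htmem : ∀ k, t k ∈ A' := fun k => (iso k).2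
  have htpos : ∀ k, 0 ≤ t k := fun k => (hA'mem _ (htmem k)).2.1
  have hspos : ∀ k, 0 < s k := fun k => (hA'mem _ (htmem k)).2.2
  have htmono : StrictMono t := by
    intro i j hij
    have := (OrderIso.lt_iff_lt iso).mpr hij
    exact_mod_cast this
  -- S is exactly A × {1}
  have hSeq : S = A.image (fun a => (a, 1)) := by
    apply Finset.ext
    rintro ⟨a, b⟩
    constructor
    · intro hx
      have hb := (hpoles (a, b) hx).2.2.1
      rw [Finset.mem_image]
      refine ⟨a, ?_, ?_⟩
      · rw [hA]; exact Finset.mem_image_of_mem _ hx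
      · exact Prod.ext rfl hb.symm
    · intro hx
      rw [Finset.mem_image] at hx
      obtain ⟨a', ha', heq⟩ := hx
      rw [hA, Finset.mem_image] at ha'
      obtain ⟨x, hx', hxa⟩ := ha'
      have h1 := (hpoles x hx').2.2.1
      have hxx : x = (a', 1) := Prod.ext hxa h1
      rw [← heq, ← hxx]
      exact hx'
  -- the main identity on points with q ≠ 0
  have hPval : ∀ z : ℂ, P.eval z = ((γ:ℝ):ℂ) := by
    intro z
    have hP : P = Polynomial.C (P.coeff 0) := Polynomial.eq_C_of_natDegree_le_zero (le_of_eq hpoly.1)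
    rw [hP]
    rw [Polynomial.eval_C]
    refine Complex.ext ?_ ?_
    · simp [hγ]
    · simp [Polynomial.coeff_C]
      exact hpoly.2.1
  have hFG : ∀ z ∈ SDom, q.eval z ≠ 0 →
      f z = ((γ:ℝ):ℂ) + ∑ k, ((s k:ℝ):ℂ) / (((t k:ℝ):ℂ) - z) := by
    intro z hz hqz
    rw [hsum z hz hqz, hPval z]
    congr 1
    rw [hSeq, Finset.sum_image (by intro x _ y _ h; exact (Prod.ext_iff.mp h).1)]
    have step1 : ∑ a ∈ A, D (a, 1) / (z - a) ^ 1
        = ∑ a ∈ A, ((σ a.re : ℝ):ℂ) / (((a.re:ℝ):ℂ) - z) := by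
      refine Finset.sum_congr rfl fun a ha => ?_
      obtain ⟨him, hre, hDim, hDre⟩ := hAmem a ha
      have hac : ((a.re:ℝ):ℂ) = a := Complex.ext (by simp) (by simp [him])
      have hDval : D (a, 1) = -((σ a.re : ℝ):ℂ) := by
        refine Complex.ext ?_ ?_
        · simp [hσ, hac]
        · simp [hσ, hDim]
      rw [hDval, pow_one, hac]
      rw [neg_div, ← div_neg, neg_sub]
    rw [step1]
    have step2 : ∑ u ∈ A', ((σ u : ℝ):ℂ) / (((u:ℝ):ℂ) - z)
        = ∑ a ∈ A, ((σ a.re : ℝ):ℂ) / (((a.re:ℝ):ℂ) - z) := by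
      rw [hA']
      refine Finset.sum_image ?_
      intro x hx y hy h
      obtain ⟨hx1, _, _, _⟩ := hAmem x hx
      obtain ⟨hy1, _, _, _⟩ := hAmem y hy
      exact Complex.ext h (by rw [hx1, hy1])
    rw [← step2]
    rw [← Finset.sum_coe_sort A' (fun u => ((σ u : ℝ):ℂ) / (((u:ℝ):ℂ) - z))]
    rw [← Equiv.sum_comp iso.toEquiv
      (fun u => ((σ (u:ℝ) : ℝ):ℂ) / ((((u:ℝ):ℝ):ℂ) - z))]
    rfl
  -- extend to all of SDom by continuity
  have hFG' : ∀ z ∈ SDom, f z = ((γ:ℝ):ℂ) + ∑ k, ((s k:ℝ):ℂ) / (((t k:ℝ):ℂ) - z) := by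
    intro z hz
    by_cases hqz : q.eval z ≠ 0
    · exact hFG z hz hqz
    push_neg at hqz
    set U : Set ℂ := {w : ℂ | q.eval w ≠ 0} with hU
    have hdense : Dense U := by
      have hfin : {w : ℂ | q.eval w = 0}.Finite := Polynomial.finite_setOf_isRoot hq
      have := hfin.countable.dense_compl ℂ
      convert this using 1
      rfl
    have hNB : (𝓝[U] z).NeBot := mem_closure_iff_nhdsWithin_neBot.mp (hdense z)
    have hGcont : Filter.Tendsto (fun w : ℂ => ((γ:ℝ):ℂ) + ∑ k, ((s k:ℝ):ℂ) / (((t k:ℝ):ℂ) - w))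
        (𝓝[U] z) (𝓝 (((γ:ℝ):ℂ) + ∑ k, ((s k:ℝ):ℂ) / (((t k:ℝ):ℂ) - z))) := by
      refine Filter.Tendsto.mono_left ?_ nhdsWithin_le_nhds
      refine Filter.Tendsto.const_add _ (tendsto_finset_sum _ fun k _ => ?_)
      refine Filter.Tendsto.div tendsto_const_nhds ((continuous_const.sub continuous_id).tendsto z) ?_
      intro hc
      have : z = ((t k:ℝ):ℂ) := by linear_combination -hc
      apply hz
      rw [this]
      constructor
      · simp [htpos k]
      · simp
    have hfcont : Filter.Tendsto f (𝓝[U] z) (𝓝 (f z)) :=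
      ((hanal z hz).continuousAt).tendsto.mono_left nhdsWithin_le_nhds
    have hev : ∀ᶠ w in 𝓝[U] z, f w = ((γ:ℝ):ℂ) + ∑ k, ((s k:ℝ):ℂ) / (((t k:ℝ):ℂ) - w) := by
      have h1 : ∀ᶠ w in 𝓝[U] z, w ∈ SDom :=
        Filter.Eventually.filter_mono nhdsWithin_le_nhds (isOpen_SDom.eventually_mem hz)
      filter_upwards [h1, self_mem_nhdsWithin] with w hw1 hw2
      exact hFG w hw1 hw2
    have hGlim : Filter.Tendsto f (𝓝[U] z)
        (𝓝 (((γ:ℝ):ℂ) + ∑ k, ((s k:ℝ):ℂ) / (((t k:ℝ):ℂ) - z))) :=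
      hGcont.congr' (by filter_upwards [hev] with w hw using hw.symm)
    exact tendsto_nhds_unique hfcont hGlim
  exact ⟨n, γ, t, s, hpoly.2.2, hspos, htpos, htmono, hFG'⟩
lemma rep_tendsto_atBot (n : ℕ) (γ : ℝ) (t s : Fin n → ℝ) :
    Filter.Tendsto (fun y : ℝ => (γ:ℂ) + ∑ k, (s k:ℂ) / ((t k:ℂ) - (((-y:ℝ)):ℂ)))
      atTop (𝓝 (γ:ℂ)) := by
  have hterm : ∀ k : Fin n, Filter.Tendsto
      (fun y : ℝ => (s k:ℂ) / ((t k:ℂ) - (((-y:ℝ)):ℂ))) atTop (𝓝 0) := by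
    intro k
    rw [tendsto_zero_iff_norm_tendsto_zero]
    simp only [norm_div]
    refine Filter.Tendsto.div_atTop tendsto_const_nhds ?_
    refine tendsto_atTop_mono' atTop ?_ (tendsto_atTop_add_const_right _ (-(|t k|)) tendsto_id)
    filter_upwards [eventually_ge_atTop (0:ℝ)] with y hy
    have : (t k:ℂ) - (((-y:ℝ)):ℂ) = (((t k + y : ℝ)):ℂ) := by push_cast; ring
    rw [this, Complex.norm_real]
    rw [Real.norm_eq_abs]
    simp only [id_eq]
    linarith [le_abs_self (t k + y), neg_abs_le (t k)]
  have hsum : Filter.Tendsto (fun y : ℝ => ∑ k, (s k:ℂ) / ((t k:ℂ) - (((-y:ℝ)):ℂ)))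
      atTop (𝓝 0) := by
    have := tendsto_finset_sum Finset.univ (fun k _ => hterm k)
    simpa using this
  have := (tendsto_const_nhds (x := (γ:ℂ)) (f := atTop (α := ℝ))).add hsum
  rwa [add_zero] at this

lemma rep_tendsto_residue (n : ℕ) (γ : ℝ) (t s : Fin n → ℝ) (u : ℝ) :
    Filter.Tendsto (fun y : ℝ => ((y:ℂ)*I) *
        ((γ:ℂ) + ∑ k, (s k:ℂ) / ((t k:ℂ) - ((u:ℂ) + (y:ℂ)*I))))
      (𝓝[>] (0:ℝ)) (𝓝 (∑ k, if t k = u then -(s k:ℂ) else 0)) := by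
  classical
  have hcongr : ∀ y : ℝ, ((y:ℂ)*I) * ((γ:ℂ) + ∑ k, (s k:ℂ) / ((t k:ℂ) - ((u:ℂ) + (y:ℂ)*I)))
      = ((y:ℂ)*I) * (γ:ℂ) + ∑ k, ((y:ℂ)*I) * ((s k:ℂ) / ((t k:ℂ) - ((u:ℂ) + (y:ℂ)*I))) := by
    intro y; rw [mul_add, Finset.mul_sum]
  simp only [hcongr]
  have h0 : Filter.Tendsto (fun y : ℝ => ((y:ℂ)*I) * (γ:ℂ)) (𝓝[>] (0:ℝ)) (𝓝 0) := by
    have hc : Filter.Tendsto (fun y : ℝ => ((y:ℂ)*I) * (γ:ℂ)) (𝓝 0)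
        (𝓝 ((((0:ℝ):ℂ)*I) * (γ:ℂ))) :=
      (((Complex.continuous_ofReal.mul continuous_const)).mul continuous_const).tendsto 0
    rw [Complex.ofReal_zero, zero_mul, zero_mul] at hc
    exact hc.mono_left nhdsWithin_le_nhds
  have hterm : ∀ k : Fin n, Filter.Tendsto
      (fun y : ℝ => ((y:ℂ)*I) * ((s k:ℂ) / ((t k:ℂ) - ((u:ℂ) + (y:ℂ)*I))))
      (𝓝[>] (0:ℝ)) (𝓝 (if t k = u then -(s k:ℂ) else 0)) := by
    intro k
    by_cases htk : t k = u
    · rw [if_pos htk]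
      refine Filter.Tendsto.congr' ?_ tendsto_const_nhds
      filter_upwards [self_mem_nhdsWithin] with y hy
      have hy' : (0:ℝ) < y := hy
      have hne : (y:ℂ)*I ≠ 0 := by
        apply mul_ne_zero _ Complex.I_ne_zero
        exact_mod_cast hy'.ne'
      rw [htk]
      have : (u:ℂ) - ((u:ℂ) + (y:ℂ)*I) = -((y:ℂ)*I) := by ring
      rw [this]
      field_simp
      rw [mul_div_cancel_right₀ _ (by exact_mod_cast hy'.ne' : (y:ℂ) ≠ 0)]
    · rw [if_neg htk]
      have hden : (t k:ℂ) - ((u:ℂ) + ((0:ℝ):ℂ)*I) ≠ 0 := by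
        rw [Complex.ofReal_zero, zero_mul, add_zero]
        intro h
        apply htk
        have := sub_eq_zero.mp h
        exact_mod_cast this
      have hc : Filter.Tendsto
          (fun y : ℝ => ((y:ℂ)*I) * ((s k:ℂ) / ((t k:ℂ) - ((u:ℂ) + (y:ℂ)*I)))) (𝓝 0)
          (𝓝 ((((0:ℝ):ℂ)*I) * ((s k:ℂ) / ((t k:ℂ) - ((u:ℂ) + ((0:ℝ):ℂ)*I))))) := by
        refine Filter.Tendsto.mul ((Complex.continuous_ofReal.mul continuous_const).tendsto 0) ?_
        exact Filter.Tendsto.div tendsto_const_nhds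
          ((continuous_const.sub (continuous_const.add
            (Complex.continuous_ofReal.mul continuous_const))).tendsto 0) hden
      rw [Complex.ofReal_zero, zero_mul, zero_mul] at hc
      exact hc.mono_left nhdsWithin_le_nhds
  have := h0.add (tendsto_finset_sum Finset.univ (fun k _ => hterm k))
  rwa [zero_add] at this

lemma unique_rep (f : ℂ → ℂ) (n₁ : ℕ) (γ₁ : ℝ) (t₁ s₁ : Fin n₁ → ℝ)
    (n₂ : ℕ) (γ₂ : ℝ) (t₂ s₂ : Fin n₂ → ℝ)
    (h₁ : PFRep f n₁ γ₁ t₁ s₁) (h₂ : PFRep f n₂ γ₂ t₂ s₂) :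
    n₁ = n₂ ∧ γ₁ = γ₂ ∧
      ∀ (i : Fin n₁) (j : Fin n₂), (i : ℕ) = (j : ℕ) → t₁ i = t₂ j ∧ s₁ i = s₂ j := by
  classical
  obtain ⟨hγ₁, hs₁, ht₁, hm₁, hrep₁⟩ := h₁
  obtain ⟨hγ₂, hs₂, ht₂, hm₂, hrep₂⟩ := h₂
  -- gamma
  have hfb : ∀ (n : ℕ) (γ : ℝ) (t s : Fin n → ℝ),
      (∀ z ∈ SDom, f z = (γ:ℂ) + ∑ k, (s k:ℂ) / ((t k:ℂ) - z)) →
      Filter.Tendsto (fun y : ℝ => f ((((-y:ℝ)):ℂ))) atTop (𝓝 (γ:ℂ)) := by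
    intro n γ t s hrep
    refine (rep_tendsto_atBot n γ t s).congr' ?_
    filter_upwards [eventually_gt_atTop (0:ℝ)] with y hy
    rw [hrep _ (mem_SDom_of_re_neg (by simp; linarith))]
  have hγeq : γ₁ = γ₂ := by
    have := tendsto_nhds_unique (hfb n₁ γ₁ t₁ s₁ hrep₁) (hfb n₂ γ₂ t₂ s₂ hrep₂)
    exact_mod_cast this
  -- residues
  have hres : ∀ (n : ℕ) (γ : ℝ) (t s : Fin n → ℝ),
      (∀ z ∈ SDom, f z = (γ:ℂ) + ∑ k, (s k:ℂ) / ((t k:ℂ) - z)) → ∀ u : ℝ,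
      Filter.Tendsto (fun y : ℝ => ((y:ℂ)*I) * f ((u:ℂ) + (y:ℂ)*I)) (𝓝[>] (0:ℝ))
        (𝓝 (∑ k, if t k = u then -(s k:ℂ) else 0)) := by
    intro n γ t s hrep u
    refine (rep_tendsto_residue n γ t s u).congr' ?_
    filter_upwards [self_mem_nhdsWithin] with y hy
    have hy' : (0:ℝ) < y := hy
    have : ((u:ℂ) + (y:ℂ)*I) ∈ SDom := by
      apply mem_SDom_of_im_pos
      simp [Complex.add_im, Complex.mul_im]
      exact hy'
    rw [hrep _ this]
  have hReq : ∀ u : ℝ, (∑ k, if t₁ k = u then (s₁ k:ℝ) else 0)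
      = ∑ k, if t₂ k = u then (s₂ k:ℝ) else 0 := by
    intro u
    have := tendsto_nhds_unique (hres n₁ γ₁ t₁ s₁ hrep₁ u) (hres n₂ γ₂ t₂ s₂ hrep₂ u)
    have hcast : ∀ (n : ℕ) (t s : Fin n → ℝ),
        ((∑ k, if t k = u then -(s k:ℝ) else 0 : ℝ) : ℂ)
        = ∑ k, if t k = u then -(s k:ℂ) else 0 := by
      intro n t s
      push_cast
      refine Finset.sum_congr rfl fun k _ => ?_
      split <;> simp
    have hr : (∑ k, if t₁ k = u then -(s₁ k:ℝ) else 0 : ℝ)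
        = ∑ k, if t₂ k = u then -(s₂ k:ℝ) else 0 := by
      have := (hcast n₁ t₁ s₁).trans (this.trans (hcast n₂ t₂ s₂).symm)
      exact_mod_cast this
    have e1 : ∀ (n : ℕ) (t s : Fin n → ℝ), (∑ k, if t k = u then -(s k:ℝ) else 0 : ℝ)
        = -(∑ k, if t k = u then (s k:ℝ) else 0) := by
      intro n t s
      rw [← Finset.sum_neg_distrib]
      refine Finset.sum_congr rfl fun k _ => ?_
      split <;> simp
    rw [e1, e1] at hr
    linarith
  -- residue values
  have hRval : ∀ (n : ℕ) (t s : Fin n → ℝ), StrictMono t → ∀ i : Fin n,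
      (∑ k, if t k = t i then (s k:ℝ) else 0) = s i := by
    intro n t s hm i
    have hiff : ∀ k, (if t k = t i then (s k:ℝ) else 0) = (if k = i then s k else 0) := by
      intro k
      by_cases h : k = i
      · subst h; simp
      · rw [if_neg h, if_neg (fun hh => h (hm.injective hh))]
    simp only [hiff]
    rw [Finset.sum_ite_eq' Finset.univ i s]
    simp
  -- equal ranges
  have hrange : Finset.univ.image t₁ = Finset.univ.image t₂ := by
    apply Finset.ext
    intro u
    simp only [Finset.mem_image, Finset.mem_univ, true_and]
    constructor
    · rintro ⟨i, rfl⟩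
      by_contra hno
      push_neg at hno
      have h0 : (∑ k, if t₂ k = t₁ i then (s₂ k:ℝ) else 0) = 0 :=
        Finset.sum_eq_zero fun k _ => if_neg (hno k)
      rw [← hReq, hRval n₁ t₁ s₁ hm₁ i] at h0
      linarith [hs₁ i]
    · rintro ⟨i, rfl⟩
      by_contra hno
      push_neg at hno
      have h0 : (∑ k, if t₁ k = t₂ i then (s₁ k:ℝ) else 0) = 0 :=
        Finset.sum_eq_zero fun k _ => if_neg (hno k)
      rw [hReq, hRval n₂ t₂ s₂ hm₂ i] at h0
      linarith [hs₂ i]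
  have hcard : n₁ = n₂ := by
    have c1 : (Finset.univ.image t₁).card = n₁ := by
      rw [Finset.card_image_of_injective _ hm₁.injective, Finset.card_univ, Fintype.card_fin]
    have c2 : (Finset.univ.image t₂).card = n₂ := by
      rw [Finset.card_image_of_injective _ hm₂.injective, Finset.card_univ, Fintype.card_fin]
    rw [← c1, hrange, c2]
  subst hcard
  have hteq : t₁ = t₂ := by
    haveI : WellFoundedLT (Fin n₁) := Finite.to_wellFoundedLT
    refine (StrictMono.range_inj hm₁ hm₂).mp ?_
    have : (↑(Finset.univ.image t₁) : Set ℝ) = ↑(Finset.univ.image t₂) := by rw [hrange]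
    simpa [Finset.coe_image, Finset.coe_univ, Set.image_univ] using this
  have hseq : ∀ i, s₁ i = s₂ i := by
    intro i
    have hres1 := hReq (t₁ i)
    rw [hRval n₁ t₁ s₁ hm₁ i] at hres1
    rw [show t₁ i = t₂ i from congrFun hteq i] at hres1
    rw [hRval n₁ t₂ s₂ hm₂ i] at hres1
    exact hres1
  refine ⟨rfl, hγeq, ?_⟩
  intro i j hij
  have : i = j := Fin.ext hij
  subst this
  exact ⟨congrFun hteq i, hseq i⟩

theorem statement11 (f : ℂ → ℂ) (hf : StieltjesClass f)
    (p q : Polynomial ℂ) (hq : q ≠ 0)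
    (hrat : ∀ z ∈ SDom, f z = p.eval z / q.eval z) :
    (∃ (n : ℕ) (γ : ℝ) (t s : Fin n → ℝ), PFRep f n γ t s) ∧
    (∀ (n₁ : ℕ) (γ₁ : ℝ) (t₁ s₁ : Fin n₁ → ℝ) (n₂ : ℕ) (γ₂ : ℝ) (t₂ s₂ : Fin n₂ → ℝ),
      PFRep f n₁ γ₁ t₁ s₁ → PFRep f n₂ γ₂ t₂ s₂ →
      n₁ = n₂ ∧ γ₁ = γ₂ ∧
        ∀ (i : Fin n₁) (j : Fin n₂), (i : ℕ) = (j : ℕ) → t₁ i = t₂ j ∧ s₁ i = s₂ j) := by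
  obtain ⟨hanal, hcase⟩ := hf
  have hex : ∃ (n : ℕ) (γ : ℝ) (t s : Fin n → ℝ), PFRep f n γ t s := by
    rcases hcase with ⟨c, hc0, hcf⟩ | ⟨himf, hpos, _⟩
    · refine ⟨0, c, ![], ![], hc0, fun k => k.elim0, fun k => k.elim0,
        fun a b h => a.elim0, ?_⟩
      intro z hz
      simp [hcf z hz]
    · exact exists_rep f hanal himf hpos p q hq hrat
  exact ⟨hex, fun n₁ γ₁ t₁ s₁ n₂ γ₂ t₂ s₂ h₁ h₂ =>
    unique_rep f n₁ γ₁ t₁ s₁ n₂ γ₂ t₂ s₂ h₁ h₂⟩
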